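/- arXiv:1301.6211 — 4 statements merged into one kernel-verified Lean document; each statement's English description precedes it below -/
import Mathlib

section
/- Let λ : ℕ≥1 → ℂ satisfy the Hecke relation λ(n)·λ(m) = ∑_{e | gcd(n,m)} λ(n·m/e²) for all positive integers n, m. Let ψ : ℝ → ℂ be a function whose support is a compact subset of (0,∞). Then for every positive integer m and every real X > 0 one has the identity ∑_{n≥1} λ(n+m)·λ(n)·ψ(πn/X) = ∑_{d | m} ∑_{n≥1} λ(n(n+d))·ψ(πmn/(dX)). (Both sums are finite because ψ has compact support in (0,∞).) -/
/-!
Since `gcd (n + m) n = gcd m n`, the Hecke relation expands `λ(n+m) λ(n)` as a sum over the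
divisors `e` of `m` that also divide `n`. Writing `n = e k`, the `e`-term of the series becomes
`∑ₖ λ(k (k + m/e)) ψ(π m k / ((m/e) X))`, and `d = m/e` runs over the divisors of `m` as `e` does.
The compact support of `ψ` makes every series finitely supported, so the finite sum over
divisors commutes with the series.
-/

open Finset Topology

def HeckeMultiplicative {R : Type*} [Semiring R] (lam : ℕ → R) : Prop :=
  ∀ n m : ℕ, 0 < n → 0 < m → lam n * lam m = ∑ e ∈ (Nat.gcd n m).divisors, lam (n * m / e ^ 2)

theorem Nat.divisors_gcd_eq_filter {m : ℕ} (hm : m ≠ 0) (n : ℕ) :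
    (m.gcd n).divisors = m.divisors.filter (· ∣ n) := by
  ext e
  simp [Nat.dvd_gcd_iff, hm]

theorem PNat.isClosedEmbedding_coe_real : IsClosedEmbedding ((↑) : ℕ+ → ℝ) :=
  Nat.isClosedEmbedding_coe_real.comp (isClosed_discrete _).isClosedEmbedding_subtypeVal

theorem HasCompactSupport.comp_mul_pnat {M : Type*} [Zero M] {ψ : ℝ → M}
    (hψ : HasCompactSupport ψ) {c : ℝ} (hc : c ≠ 0) :
    HasCompactSupport fun n : ℕ+ => ψ (c * n) :=
  (hψ.comp_homeomorph (Homeomorph.mulLeft₀ c hc)).comp_isClosedEmbedding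
    PNat.isClosedEmbedding_coe_real

theorem HasCompactSupport.summable_mul_comp_mul_pnat {R : Type*} [NonUnitalNonAssocSemiring R]
    [TopologicalSpace R] {ψ : ℝ → R} (hψ : HasCompactSupport ψ) {c : ℝ} (hc : c ≠ 0)
    (a : ℕ+ → R) : Summable fun n : ℕ+ => a n * ψ (c * n) := by
  refine summable_of_hasFiniteSupport ?_
  exact ((hψ.comp_mul_pnat hc).mul_left (f := a)).isCompact.finite_of_discrete.subset
    (subset_tsupport _)

theorem HeckeMultiplicative.mul_add_left {R : Type*} [Semiring R] {lam : ℕ → R}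
    (hlam : HeckeMultiplicative lam) {n m : ℕ} (hn : 0 < n) (hm : 0 < m) :
    lam (n + m) * lam n = ∑ e ∈ m.divisors, if e ∣ n then lam ((n + m) * n / e ^ 2) else 0 := by
  rw [hlam _ _ (by omega) hn, add_comm n m, Nat.gcd_add_self_left,
    Nat.divisors_gcd_eq_filter hm.ne', sum_filter]

theorem tsum_ite_dvd_eq_tsum_mul {M : Type*} [AddCommMonoid M] [TopologicalSpace M]
    (e : ℕ+) (g : ℕ+ → M) :
    ∑' n : ℕ+, (if (e : ℕ) ∣ n then g n else 0) = ∑' k : ℕ+, g (e * k) := by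
  refine ((mul_right_injective e).tsum_eq fun n hn => ?_).symm.trans (tsum_congr fun k => ?_)
  · obtain ⟨k, hk⟩ : (e : ℕ) ∣ n := by by_contra h; simp [h] at hn
    have hk0 : 0 < k := Nat.pos_of_mul_pos_left (hk ▸ n.pos)
    exact ⟨⟨k, hk0⟩, PNat.eq hk.symm⟩
  · simp [PNat.mul_coe]

open Real in
theorem tsum_hecke_shift_term_eq {R : Type*} [Semiring R] [TopologicalSpace R] (lam : ℕ → R)
    (ψ : ℝ → R) (X : ℝ) (e : ℕ+) {d m : ℕ} (hd : d ≠ 0) (hedm : e * d = m) :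
    ∑' n : ℕ+, (if (e : ℕ) ∣ n then lam ((n + m) * n / e ^ 2) else 0) * ψ (π * n / X) =
      ∑' k : ℕ+, lam (k * (k + d)) * ψ (π * m * k / (d * X)) := by
  subst hedm
  simp_rw [ite_mul, zero_mul]
  rw [tsum_ite_dvd_eq_tsum_mul e]
  refine tsum_congr fun k => ?_
  have hlam : (e * k + e * d) * (e * k) / e ^ 2 = k * (k + d) := by
    rw [show (e * k + e * d) * (e * k) = e ^ 2 * (k * (k + d)) by ring,
      Nat.mul_div_cancel_left _ (by positivity)]
  have hψ : π * (e * k : ℕ) / X = π * (e * d : ℕ) * k / (d * X) := by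
    push_cast
    field_simp
  rw [PNat.mul_coe, hlam, hψ]

theorem stmt_0_general (lam : ℕ → ℂ)
    (hHecke : ∀ n m : ℕ, 0 < n → 0 < m →
      lam n * lam m = ∑ e ∈ (Nat.gcd n m).divisors, lam (n * m / e ^ 2))
    (ψ : ℝ → ℂ) (hψc : HasCompactSupport ψ)
    (m : ℕ) (hm : 0 < m) (X : ℝ) (hX : 0 < X) :
    ∑' n : ℕ+, lam (n + m) * lam n * ψ (Real.pi * n / X)
      = ∑ d ∈ m.divisors, ∑' n : ℕ+,
          lam (n * (n + d)) * ψ (Real.pi * m * n / (d * X)) := by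
  calc ∑' n : ℕ+, lam (n + m) * lam n * ψ (Real.pi * n / X)
      = ∑' n : ℕ+, ∑ e ∈ m.divisors,
          (if e ∣ n then lam ((n + m) * n / e ^ 2) else 0) * ψ (Real.pi * n / X) := by
        refine tsum_congr fun n => ?_
        rw [HeckeMultiplicative.mul_add_left hHecke n.pos hm, sum_mul]
    _ = ∑ e ∈ m.divisors, ∑' n : ℕ+,
          (if e ∣ n then lam ((n + m) * n / e ^ 2) else 0) * ψ (Real.pi * n / X) := by
        refine Summable.tsum_finsetSum fun e _ => ?_
        simp_rw [mul_div_right_comm Real.pi]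
        exact hψc.summable_mul_comp_mul_pnat (by positivity) _
    _ = ∑ e ∈ m.divisors, ∑' n : ℕ+,
          lam (n * (n + m / e)) * ψ (Real.pi * m * n / ((m / e : ℕ) * X)) := by
        refine sum_congr rfl fun e he => ?_
        have he0 : 0 < e := Nat.pos_of_mem_divisors he
        have hem : e ∣ m := Nat.dvd_of_mem_divisors he
        exact tsum_hecke_shift_term_eq lam ψ X ⟨e, he0⟩
          (Nat.div_pos (Nat.le_of_dvd hm hem) he0).ne' (Nat.mul_div_cancel' hem)
    _ = _ := Nat.sum_div_divisors m fun d => ∑' n : ℕ+,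
          lam (n * (n + d)) * ψ (Real.pi * m * n / (d * X))

/-- Let `lam : ℕ → ℂ` satisfy the Hecke relation
`lam n * lam m = ∑_{e | gcd(n,m)} lam (n*m/e²)` for all positive integers `n, m`.
Let `ψ : ℝ → ℂ` have compact support contained in `(0,∞)`.  Then for every positive
integer `m` and every real `X > 0`,
`∑_{n≥1} lam(n+m)·lam(n)·ψ(πn/X) = ∑_{d ∣ m} ∑_{n≥1} lam(n(n+d))·ψ(πmn/(dX))`. -/
theorem stmt_0 (lam : ℕ → ℂ)
    (hHecke : ∀ n m : ℕ, 0 < n → 0 < m →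
      lam n * lam m = ∑ e ∈ (Nat.gcd n m).divisors, lam (n * m / e ^ 2))
    (ψ : ℝ → ℂ) (hψc : HasCompactSupport ψ) (hψs : tsupport ψ ⊆ Set.Ioi 0)
    (m : ℕ) (hm : 0 < m) (X : ℝ) (hX : 0 < X) :
    ∑' n : ℕ+, lam (n + m) * lam n * ψ (Real.pi * n / X)
      = ∑ d ∈ m.divisors, ∑' n : ℕ+,
          lam (n * (n + d)) * ψ (Real.pi * m * n / (d * X)) :=
  stmt_0_general lam hHecke ψ hψc m hm X hX
end

section
/- There exists an absolute constant C > 0 such that for all R > 0, all r₁, r₂ ∈ [R, 2R], and all d with 0 < d ≤ R: the second partial derivatives of Δ satisfy |∂²Δ/∂r₁∂r₂(r₁,r₂) − 1| ≤ C·d²/R² and |∂²Δ/∂r₁²(r₁,r₂)| ≤ C·d²/R², |∂²Δ/∂r₂²(r₁,r₂)| ≤ C·d²/R². -/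
/-!
With `g t = √(t (t + d))` the phase factors as `Δ(r₁, r₂) = g r₁ * g r₂`, so
`Δ_{r₁r₂} = g' r₁ * g' r₂` and `Δ_{r₁r₁} = g'' r₁ * g r₂`. Here `g' = (2t + d) / (2g)` satisfies
`g'² = 1 + d² / (4t(t + d))`, hence `1 ≤ g' ≤ 1 + d² / (4t²)`, while `g'' = -d² / (4g³)` and
`t ≤ g t ≤ t + d/2`. On `[R, 2R]` with `d ≤ R` both estimates hold with `C = 1`.
-/

open Real Filter Topology

noncomputable def sqrtMulAdd (d t : ℝ) : ℝ := √(t * (t + d))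

namespace sqrtMulAdd

variable {d t : ℝ}

lemma hasDerivAt (h : t * (t + d) ≠ 0) :
    HasDerivAt (sqrtMulAdd d) ((2 * t + d) / (2 * sqrtMulAdd d t)) t := by
  have hpoly : HasDerivAt (fun t : ℝ => t * (t + d)) (2 * t + d) t :=
    ((hasDerivAt_id' t).mul ((hasDerivAt_id' t).add_const d)).congr_deriv (by ring)
  exact hpoly.sqrt h

lemma sq_eq (h : 0 ≤ t * (t + d)) : sqrtMulAdd d t ^ 2 = t * (t + d) := sq_sqrt h

lemma nonneg : 0 ≤ sqrtMulAdd d t := sqrt_nonneg _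

lemma pos (h : 0 < t * (t + d)) : 0 < sqrtMulAdd d t := sqrt_pos.2 h

lemma hasDerivAt_deriv (h : 0 < t * (t + d)) :
    HasDerivAt (fun t => (2 * t + d) / (2 * sqrtMulAdd d t))
      (-d ^ 2 / (4 * sqrtMulAdd d t ^ 3)) t := by
  have hnum : HasDerivAt (fun t : ℝ => 2 * t + d) 2 t := by
    simpa using ((hasDerivAt_id t).const_mul 2).add_const d
  have hu := pos h
  refine (hnum.div ((hasDerivAt h.ne').const_mul 2) (by positivity)).congr_deriv ?_
  field_simp
  linear_combination 16 * sq_eq h.le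

lemma deriv_eq (hd : 0 ≤ d) (ht : 0 < t) :
    deriv (sqrtMulAdd d) t = (2 * t + d) / (2 * sqrtMulAdd d t) :=
  (hasDerivAt (by positivity)).deriv

lemma deriv_deriv_eq (hd : 0 ≤ d) (ht : 0 < t) :
    deriv (deriv (sqrtMulAdd d)) t = -d ^ 2 / (4 * sqrtMulAdd d t ^ 3) := by
  have hloc : deriv (sqrtMulAdd d) =ᶠ[𝓝 t] fun t => (2 * t + d) / (2 * sqrtMulAdd d t) := by
    filter_upwards [lt_mem_nhds ht] with s hs using deriv_eq hd hs
  rw [hloc.deriv_eq]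
  exact (hasDerivAt_deriv (by positivity)).deriv

lemma self_le (hd : 0 ≤ d) (ht : 0 ≤ t) : t ≤ sqrtMulAdd d t :=
  le_sqrt_of_sq_le (by nlinarith)

lemma le_add_half (hd : 0 ≤ d) (ht : 0 ≤ t) : sqrtMulAdd d t ≤ t + d / 2 :=
  sqrt_le_iff.2 ⟨by positivity, by nlinarith⟩

lemma one_le_deriv (hd : 0 ≤ d) (ht : 0 < t) : 1 ≤ deriv (sqrtMulAdd d) t := by
  rw [deriv_eq hd ht, one_le_div (by positivity [pos (show 0 < t * (t + d) by positivity)])]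
  linarith [le_add_half hd ht.le]

lemma deriv_sub_one_le (hd : 0 ≤ d) (ht : 0 < t) :
    deriv (sqrtMulAdd d) t - 1 ≤ d ^ 2 / (4 * t ^ 2) := by
  have htd : 0 < t * (t + d) := by positivity
  have hsq : deriv (sqrtMulAdd d) t ^ 2 = 1 + d ^ 2 / (4 * (t * (t + d))) := by
    have hu := pos htd
    rw [deriv_eq hd ht]
    field_simp
    nlinarith [sq_eq htd.le]
  have hmono : d ^ 2 / (4 * (t * (t + d))) ≤ d ^ 2 / (4 * t ^ 2) := by
    gcongr; nlinarith
  nlinarith [one_le_deriv hd ht]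

end sqrtMulAdd

section Kernel

open sqrtMulAdd

variable {d r r₁ r₂ R : ℝ}

lemma sqrt_mul_mul_add_mul_add (hd : 0 ≤ d) {t : ℝ} (ht : 0 ≤ t) (s : ℝ) :
    √(t * s * (t + d) * (s + d)) = sqrtMulAdd d t * sqrtMulAdd d s := by
  rw [sqrtMulAdd, sqrtMulAdd, ← sqrt_mul (by positivity)]
  ring_nf

lemma kernel_eventuallyEq (hd : 0 ≤ d) (hr : 0 < r) (s : ℝ) :
    (fun t => √(t * s * (t + d) * (s + d))) =ᶠ[𝓝 r] fun t => sqrtMulAdd d t * sqrtMulAdd d s := by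
  filter_upwards [lt_mem_nhds hr] with t ht using sqrt_mul_mul_add_mul_add hd ht.le s

lemma deriv_kernel (hd : 0 ≤ d) (hr : 0 < r) (s : ℝ) :
    deriv (fun t => √(t * s * (t + d) * (s + d))) r = deriv (sqrtMulAdd d) r * sqrtMulAdd d s := by
  rw [(kernel_eventuallyEq hd hr s).deriv_eq, deriv_mul_const_field]

lemma deriv_deriv_kernel (hd : 0 ≤ d) (hr : 0 < r) (s : ℝ) :
    deriv (deriv fun t => √(t * s * (t + d) * (s + d))) r =
      deriv (deriv (sqrtMulAdd d)) r * sqrtMulAdd d s := by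
  rw [(kernel_eventuallyEq hd hr s).deriv.deriv_eq, deriv_mul_const_field', deriv_mul_const_field]

lemma deriv_deriv_kernel_mixed (hd : 0 ≤ d) (hr₁ : 0 < r₁) (hr₂ : 0 < r₂) :
    deriv (fun s => deriv (fun t => √(t * s * (t + d) * (s + d))) r₁) r₂ =
      deriv (sqrtMulAdd d) r₁ * deriv (sqrtMulAdd d) r₂ := by
  have hloc : (fun s => deriv (fun t => √(t * s * (t + d) * (s + d))) r₁) =ᶠ[𝓝 r₂]
      fun s => deriv (sqrtMulAdd d) r₁ * sqrtMulAdd d s := by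
    filter_upwards [lt_mem_nhds hr₂] with s hs using deriv_kernel hd hr₁ s
  rw [hloc.deriv_eq, deriv_const_mul_field]

lemma abs_deriv_mul_deriv_sub_one_le (hR : 0 < R) (hd : 0 ≤ d) (hdR : d ≤ R)
    (hr₁ : r₁ ∈ Set.Icc R (2 * R)) (hr₂ : r₂ ∈ Set.Icc R (2 * R)) :
    |deriv (sqrtMulAdd d) r₁ * deriv (sqrtMulAdd d) r₂ - 1| ≤ d ^ 2 / R ^ 2 := by
  have hsub {t : ℝ} (ht : R ≤ t) :
      0 ≤ deriv (sqrtMulAdd d) t - 1 ∧ deriv (sqrtMulAdd d) t - 1 ≤ d ^ 2 / R ^ 2 / 4 := by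
    refine ⟨sub_nonneg.2 (one_le_deriv hd (hR.trans_le ht)),
      (deriv_sub_one_le hd (hR.trans_le ht)).trans ?_⟩
    rw [div_div, mul_comm 4]
    gcongr
  have hε : d ^ 2 / R ^ 2 ≤ 1 := by
    rw [div_le_one (by positivity)]
    gcongr
  obtain ⟨ha₀, ha⟩ := hsub hr₁.1
  obtain ⟨hb₀, hb⟩ := hsub hr₂.1
  rw [abs_le]
  constructor <;> nlinarith [mul_le_mul ha hb hb₀ (by positivity)]

lemma abs_deriv_deriv_mul_le (hR : 0 < R) (hd : 0 ≤ d) (hdR : d ≤ R)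
    (hr₁ : r₁ ∈ Set.Icc R (2 * R)) (hr₂ : r₂ ∈ Set.Icc R (2 * R)) :
    |deriv (deriv (sqrtMulAdd d)) r₁ * sqrtMulAdd d r₂| ≤ d ^ 2 / R ^ 2 := by
  have hr₁0 : 0 < r₁ := hR.trans_le hr₁.1
  have hlow : R ≤ sqrtMulAdd d r₁ := hr₁.1.trans (self_le hd hr₁0.le)
  have hup : sqrtMulAdd d r₂ ≤ 3 * R := by
    linarith [le_add_half hd (hR.le.trans hr₂.1), hr₂.2]
  have hpos : 0 < sqrtMulAdd d r₁ := hR.trans_le hlow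
  rw [deriv_deriv_eq hd hr₁0, abs_mul, abs_div, abs_neg, abs_of_nonneg (sq_nonneg d),
    abs_of_pos (by positivity), abs_of_nonneg nonneg, div_mul_eq_mul_div,
    div_le_div_iff₀ (by positivity) (by positivity)]
  have hcube : R ^ 3 ≤ sqrtMulAdd d r₁ ^ 3 := by gcongr
  nlinarith [mul_le_mul_of_nonneg_left hup (by positivity : 0 ≤ d ^ 2 * R ^ 2),
    mul_le_mul_of_nonneg_left hcube (sq_nonneg d), pow_pos hpos 3]

end Kernel

/-- With `Δ(r₁,r₂) = √(r₁r₂(r₁+d)(r₂+d))`, there is an absolute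
constant `C > 0` such that for all `R > 0`, all `r₁, r₂ ∈ [R, 2R]` and all
`0 < d ≤ R`, the second partial derivatives satisfy
`|∂²Δ/∂r₁∂r₂ − 1| ≤ C·d²/R²`, `|∂²Δ/∂r₁²| ≤ C·d²/R²` and `|∂²Δ/∂r₂²| ≤ C·d²/R²`. -/
theorem stmt_6 :
    ∃ C : ℝ, 0 < C ∧ ∀ R d r₁ r₂ : ℝ, 0 < R → 0 < d → d ≤ R →
      r₁ ∈ Set.Icc R (2 * R) → r₂ ∈ Set.Icc R (2 * R) →
      |deriv (fun s : ℝ =>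
          deriv (fun t : ℝ => Real.sqrt (t * s * (t + d) * (s + d))) r₁) r₂ - 1|
        ≤ C * d ^ 2 / R ^ 2 ∧
      |deriv (deriv (fun t : ℝ => Real.sqrt (t * r₂ * (t + d) * (r₂ + d)))) r₁|
        ≤ C * d ^ 2 / R ^ 2 ∧
      |deriv (deriv (fun t : ℝ => Real.sqrt (r₁ * t * (r₁ + d) * (t + d)))) r₂|
        ≤ C * d ^ 2 / R ^ 2 := by
  refine ⟨1, one_pos, fun R d r₁ r₂ hR hd hdR h₁ h₂ => ?_⟩
  have hr₁ : 0 < r₁ := hR.trans_le h₁.1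
  have hr₂ : 0 < r₂ := hR.trans_le h₂.1
  have hswap : (fun t => √(r₁ * t * (r₁ + d) * (t + d))) =
      fun t => √(t * r₁ * (t + d) * (r₁ + d)) := by
    ext t; ring_nf
  rw [one_mul, deriv_deriv_kernel_mixed hd.le hr₁ hr₂, deriv_deriv_kernel hd.le hr₁,
    hswap, deriv_deriv_kernel hd.le hr₂]
  exact ⟨abs_deriv_mul_deriv_sub_one_le hR hd.le hdR h₁ h₂,
    abs_deriv_deriv_mul_le hR hd.le hdR h₁ h₂, abs_deriv_deriv_mul_le hR hd.le hdR h₂ h₁⟩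
end

section
/- Fix integers d, u, v. If c₁, c₂ are positive integers with gcd(c₁, c₂) = 1, then for every integer γ one has S_{c₁ c₂}(γ) = S_{c₁}(γ c₂) · S_{c₂}(γ c₁). -/
/-!
Under the Chinese remainder theorem write residues mod `c₁c₂` as `c₂z₁ + c₁z₂` with
`zᵢ ∈ ℤ/cᵢℤ`; then `e_{c₁c₂}(c₂z₁ + c₁z₂) = e_{c₁}(z₁) e_{c₂}(z₂)`. The units mod `c₁c₂` are pairs of
units, so the Kloosterman sum of twisted arguments factors. For `a = c₂a₁ + c₁a₂` the arguments
`a(γa + d)` and `2γab + (d+u)a + (d+v)b` are again of the form `c₂(·) + c₁(·)`, where the extra factor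
`c₂` (resp. `c₁`) coming from the quadratic terms is absorbed into `γ`, replacing it by `γc₂`
(resp. `γc₁`). Hence every summand of `S_{c₁c₂}(γ)` factors and the double sum splits.
-/

/-- `e_c(z) = exp(2πiz/c)`, well defined on residue classes mod `c`. -/
noncomputable def ec (c : ℕ) (z : ZMod c) : ℂ :=
  Complex.exp (2 * Real.pi * Complex.I * (z.val : ℂ) / (c : ℂ))

/-- The Kloosterman sum `S(n,m;c) = ∑_{x ∈ (ℤ/cℤ)ˣ} e_c(nx + m x⁻¹)`. -/
noncomputable def Kloos (c : ℕ) [NeZero c] (n m : ZMod c) : ℂ :=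
  ∑ x : (ZMod c)ˣ, ec c (n * (x : ZMod c) + m * ((x⁻¹ : (ZMod c)ˣ) : ZMod c))

/-- The twisted sum
`S_c(γ) = ∑_{a,b (c)} S(a(γa+d), b(γb+d); c) · e_c(2γab + (d+u)a + (d+v)b)`. -/
noncomputable def Sc (c : ℕ) [NeZero c] (d u v : ℤ) (γ : ℤ) : ℂ :=
  ∑ a : ZMod c, ∑ b : ZMod c,
    Kloos c (a * (γ * a + d)) (b * (γ * b + d)) *
      ec c (2 * γ * a * b + (d + u) * a + (d + v) * b)

open Complex in
lemma ec_natCast (c n : ℕ) : ec c n = exp (2 * Real.pi * I * n / c) := by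
  rcases eq_or_ne c 0 with rfl | hc
  · simp [ec]
  have hc' : (c : ℂ) ≠ 0 := Nat.cast_ne_zero.2 hc
  have hn : (n : ℂ) = (n % c : ℕ) + (n / c : ℕ) * c := by
    exact_mod_cast (Nat.mod_add_div' n c).symm
  rw [ec, ZMod.val_natCast, hn, mul_add, add_div, exp_add,
    show 2 * Real.pi * I * ((n / c : ℕ) * c) / c = (n / c : ℕ) * (2 * Real.pi * I) by
      field_simp,
    exp_nat_mul_two_pi_mul_I, mul_one]

section CRT

variable {c₁ c₂ : ℕ} (h : c₁.Coprime c₂)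

noncomputable def crtTwist : ZMod c₁ × ZMod c₂ ≃ ZMod (c₁ * c₂) :=
  (Equiv.prodCongr (Units.mulLeft (ZMod.unitOfCoprime c₂ h.symm))
    (Units.mulLeft (ZMod.unitOfCoprime c₁ h))).trans (ZMod.chineseRemainder h).symm.toEquiv

lemma eq_crtTwist_iff {w : ZMod (c₁ * c₂)} {z : ZMod c₁ × ZMod c₂} :
    w = crtTwist h z ↔
      ZMod.chineseRemainder h w = ((c₂ : ZMod c₁) * z.1, (c₁ : ZMod c₂) * z.2) := by
  simp [crtTwist, RingEquiv.eq_symm_apply, Prod.map]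

lemma crtTwist_eq_natCast [NeZero c₁] [NeZero c₂] (z : ZMod c₁ × ZMod c₂) :
    crtTwist h z = ((c₂ * z.1.val + c₁ * z.2.val : ℕ) : ZMod (c₁ * c₂)) := by
  symm
  rw [eq_crtTwist_iff]
  ext <;> simp only [Nat.cast_add, Nat.cast_mul, map_add, map_mul, map_natCast, Prod.fst_add,
    Prod.snd_add, Prod.fst_mul, Prod.snd_mul, Prod.fst_natCast, Prod.snd_natCast,
    ZMod.natCast_self, ZMod.natCast_zmod_val, zero_mul, add_zero, zero_add]

lemma ec_crtTwist [NeZero c₁] [NeZero c₂] (z : ZMod c₁ × ZMod c₂) :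
    ec (c₁ * c₂) (crtTwist h z) = ec c₁ z.1 * ec c₂ z.2 := by
  have h₁ : (c₁ : ℂ) ≠ 0 := Nat.cast_ne_zero.2 (NeZero.ne c₁)
  have h₂ : (c₂ : ℂ) ≠ 0 := Nat.cast_ne_zero.2 (NeZero.ne c₂)
  rw [crtTwist_eq_natCast, ec_natCast, ec, ec, ← Complex.exp_add]
  congr 1
  push_cast
  field_simp

lemma kloos_crtTwist [NeZero c₁] [NeZero c₂] (n m : ZMod c₁ × ZMod c₂) :
    Kloos (c₁ * c₂) (crtTwist h n) (crtTwist h m) = Kloos c₁ n.1 m.1 * Kloos c₂ n.2 m.2 := by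
  let units : (ZMod c₁)ˣ × (ZMod c₂)ˣ ≃* (ZMod (c₁ * c₂))ˣ :=
    MulEquiv.prodUnits.symm.trans (Units.mapEquiv (ZMod.chineseRemainder h).symm.toMulEquiv)
  have crt_units (x : (ZMod c₁)ˣ × (ZMod c₂)ˣ) :
      ZMod.chineseRemainder h (units x) = ((x.1 : ZMod c₁), (x.2 : ZMod c₂)) := by
    simp [units, MulEquiv.prodUnits]
  have phase (x : (ZMod c₁)ˣ × (ZMod c₂)ˣ) :
      crtTwist h n * (units x : ZMod (c₁ * c₂)) +
          crtTwist h m * ((units x)⁻¹ : (ZMod (c₁ * c₂))ˣ) =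
        crtTwist h (n.1 * x.1 + m.1 * (x.1⁻¹ : (ZMod c₁)ˣ),
          n.2 * x.2 + m.2 * (x.2⁻¹ : (ZMod c₂)ˣ)) := by
    rw [eq_crtTwist_iff, ← map_inv, map_add, map_mul, map_mul, crt_units, crt_units,
      (eq_crtTwist_iff h).1 rfl, (eq_crtTwist_iff h).1 rfl]
    ext <;> simp only [Prod.fst_add, Prod.snd_add, Prod.fst_mul, Prod.snd_mul, Prod.fst_inv,
      Prod.snd_inv] <;> ring
  rw [Kloos, ← units.toEquiv.sum_comp]
  simp only [MulEquiv.toEquiv_eq_coe, EquivLike.coe_coe, phase, ec_crtTwist, Fintype.sum_prod_type]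
  rw [Kloos, Kloos, Finset.sum_mul_sum]

end CRT

lemma sum_prod_sum_prod_mul {α β γ δ R : Type*} [Fintype α] [Fintype β] [Fintype γ] [Fintype δ]
    [CommSemiring R] (f : α → β → R) (g : γ → δ → R) :
    ∑ p : α × γ, ∑ q : β × δ, f p.1 q.1 * g p.2 q.2 = (∑ a, ∑ b, f a b) * ∑ c, ∑ d, g c d := by
  simp only [Fintype.sum_prod_type, Finset.sum_mul_sum]

noncomputable def scTerm (c : ℕ) [NeZero c] (d u v γ : ℤ) (a b : ZMod c) : ℂ :=
  Kloos c (a * (γ * a + d)) (b * (γ * b + d)) * ec c (2 * γ * a * b + (d + u) * a + (d + v) * b)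

lemma sc_eq_sum_scTerm (c : ℕ) [NeZero c] (d u v γ : ℤ) :
    Sc c d u v γ = ∑ a, ∑ b, scTerm c d u v γ a b :=
  rfl

lemma scTerm_crtTwist {c₁ c₂ : ℕ} [NeZero c₁] [NeZero c₂] (h : c₁.Coprime c₂) (d u v γ : ℤ)
    (p q : ZMod c₁ × ZMod c₂) :
    scTerm (c₁ * c₂) d u v γ (crtTwist h p) (crtTwist h q) =
      scTerm c₁ d u v (γ * c₂) p.1 q.1 * scTerm c₂ d u v (γ * c₁) p.2 q.2 := by
  have quadratic (r : ZMod c₁ × ZMod c₂) : crtTwist h r * (γ * crtTwist h r + d) =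
      crtTwist h (r.1 * (((γ * c₂ : ℤ) : ZMod c₁) * r.1 + d),
        r.2 * (((γ * c₁ : ℤ) : ZMod c₂) * r.2 + d)) := by
    rw [eq_crtTwist_iff]
    simp only [map_mul, map_add, map_intCast, (eq_crtTwist_iff h).1 rfl]
    ext <;> simp only [Prod.fst_add, Prod.snd_add, Prod.fst_mul, Prod.snd_mul, Prod.fst_intCast,
      Prod.snd_intCast] <;> push_cast <;> ring
  have linear :
      2 * γ * crtTwist h p * crtTwist h q + (d + u) * crtTwist h p + (d + v) * crtTwist h q =
      crtTwist h (2 * ((γ * c₂ : ℤ) : ZMod c₁) * p.1 * q.1 + (d + u) * p.1 + (d + v) * q.1,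
        2 * ((γ * c₁ : ℤ) : ZMod c₂) * p.2 * q.2 + (d + u) * p.2 + (d + v) * q.2) := by
    rw [eq_crtTwist_iff]
    simp only [map_mul, map_add, map_intCast, map_ofNat, (eq_crtTwist_iff h).1 rfl]
    ext <;> simp only [Prod.fst_add, Prod.snd_add, Prod.fst_mul, Prod.snd_mul, Prod.fst_intCast,
      Prod.snd_intCast, Prod.fst_ofNat, Prod.snd_ofNat] <;> push_cast <;> ring
  rw [scTerm, scTerm, scTerm, quadratic, quadratic, linear, kloos_crtTwist, ec_crtTwist]
  ring

/-- Twisted multiplicativity: for fixed `d, u, v`, if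
`gcd(c₁, c₂) = 1` then `S_{c₁c₂}(γ) = S_{c₁}(γc₂) · S_{c₂}(γc₁)`. -/
theorem stmt_8 (d u v : ℤ) (c₁ c₂ : ℕ) [NeZero c₁] [NeZero c₂]
    (h : Nat.Coprime c₁ c₂) (γ : ℤ) :
    Sc (c₁ * c₂) d u v γ = Sc c₁ d u v (γ * c₂) * Sc c₂ d u v (γ * c₁) := by
  rw [sc_eq_sum_scTerm, sc_eq_sum_scTerm, sc_eq_sum_scTerm, ← sum_prod_sum_prod_mul,
    ← (crtTwist h).sum_comp]
  refine Finset.sum_congr rfl fun p _ => ?_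
  rw [← (crtTwist h).sum_comp]
  simp only [scTerm_crtTwist]
end

section
/- Fix integers d, u, v, let γ be an integer and let c be a positive integer with gcd(c, 2γ) = 1. Then S_c(γ) = c · ∑_{x ∈ (ℤ/cℤ)ˣ, u ≡ x·v (mod c)} G_c(γx) · e_c( − (4γ)⁻¹ · x · ((d+u)·x⁻¹ + d)² ), where G_c(t) = ∑_{a ∈ ℤ/cℤ} e_c(t a²) is the quadratic Gauss sum and (4γ)⁻¹ denotes the inverse of 4γ modulo c. -/
/-- The quadratic Gauss sum `G_c(t) = ∑_{a (c)} e_c(t a²)`. -/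
noncomputable def Gc (c : ℕ) [NeZero c] (t : ZMod c) : ℂ :=
  ∑ a : ZMod c, ec c (t * a ^ 2)

/-!
Opening the Kloosterman sum, the phase of the summand indexed by `a, b, x` is
`γ x⁻¹ (x a + b)² + ((x⁻¹ + 1) d + v)(x a + b) + a (u - x v)`. Shearing `b ↦ b - x a` separates
the variables, the sum over `a` detects `u = x v` by orthogonality, and completing the square
turns the remaining sum over `b` into a Gauss sum `G_c(γ x⁻¹) = G_c(γ x)` times a phase.
-/

open Finset

lemma ec_eq_stdAddChar (c : ℕ) [NeZero c] (z : ZMod c) : ec c z = ZMod.stdAddChar z := by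
  conv_rhs => rw [← ZMod.intCast_zmod_cast z]
  rw [ZMod.stdAddChar_coe]
  simp [ec]

section FiniteRing

variable {R M : Type*} [CommRing R] [Fintype R] [CommSemiring M]

lemma sum_sum_mul_add_mul (k : R) (f g : R → M) :
    ∑ a, ∑ b, f (k * a + b) * g a = (∑ a, g a) * ∑ t, f t := by
  rw [sum_mul]
  refine sum_congr rfl fun a _ => ?_
  rw [← sum_mul, mul_comm]
  exact congrArg _ (Equiv.sum_comp (Equiv.addLeft (k * a)) f)

lemma AddChar.sum_mul_sq_add_mul (ψ : AddChar R M) {α β : R} (h : 4 * α * β = 1) (L : R) :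
    ∑ t, ψ (α * t ^ 2 + L * t) = ψ (-(β * L ^ 2)) * ∑ t, ψ (α * t ^ 2) := by
  rw [mul_sum]
  refine Fintype.sum_equiv (Equiv.addRight (2 * β * L)) _ _ fun t => ?_
  rw [← AddChar.map_add_eq_mul, Equiv.coe_addRight]
  congr 1
  linear_combination -(L * t + β * L ^ 2) * h

end FiniteRing

lemma kloosterman_phase_eq {R : Type*} [CommRing R] {x y : R} (hxy : x * y = 1)
    (γ d u v a b : R) :
    a * (γ * a + d) * x + b * (γ * b + d) * y + (2 * γ * a * b + (d + u) * a + (d + v) * b) =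
      γ * y * (x * a + b) ^ 2 + ((y + 1) * d + v) * (x * a + b) + a * (u - x * v) := by
  linear_combination (-γ * a ^ 2 * x - 2 * γ * a * b - a * d) * hxy

lemma Gc_mul_sq_unit (c : ℕ) [NeZero c] (t : ZMod c) (x : (ZMod c)ˣ) :
    Gc c (t * (x : ZMod c) ^ 2) = Gc c t := by
  refine Fintype.sum_equiv (Units.mulLeft x) _ _ fun a => ?_
  simp only [Units.mulLeft, Equiv.coe_fn_mk]
  ring_nf

lemma sum_sum_stdAddChar_kloosterman_phase (c : ℕ) [NeZero c] {γ β : ZMod c}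
    (hβ : 4 * γ * β = 1) (d u v : ZMod c) (x : (ZMod c)ˣ) :
    ∑ a : ZMod c, ∑ b : ZMod c, ZMod.stdAddChar
      (a * (γ * a + d) * (x : ZMod c) + b * (γ * b + d) * ((x⁻¹ : (ZMod c)ˣ) : ZMod c)
        + (2 * γ * a * b + (d + u) * a + (d + v) * b)) =
      if u = x * v then
        c * (Gc c (γ * x) * ec c (-(β * x * ((d + u) * ((x⁻¹ : (ZMod c)ˣ) : ZMod c) + d) ^ 2)))
      else 0 := by
  set ψ := ZMod.stdAddChar (N := c)
  set y : ZMod c := ((x⁻¹ : (ZMod c)ˣ) : ZMod c)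
  set L := (y + 1) * d + v
  have hxy : (x : ZMod c) * y = 1 := x.mul_inv
  have hphase : ∀ a b : ZMod c,
      ψ (a * (γ * a + d) * x + b * (γ * b + d) * y + (2 * γ * a * b + (d + u) * a + (d + v) * b))
        = ψ (γ * y * (x * a + b) ^ 2 + L * (x * a + b)) * ψ (a * (u - x * v)) := fun a b => by
    rw [kloosterman_phase_eq hxy, AddChar.map_add_eq_mul]
  simp only [hphase]
  rw [sum_sum_mul_add_mul (x : ZMod c) (fun t => ψ (γ * y * t ^ 2 + L * t)),
    AddChar.sum_mulShift _ (ZMod.isPrimitive_stdAddChar c), ZMod.card]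
  by_cases hu : u = x * v
  · have hL : (d + u) * y + d = L := by linear_combination y * hu + v * hxy
    have hGc : Gc c (γ * x) = Gc c (γ * y * (x : ZMod c) ^ 2) := by
      congr 1
      linear_combination -(γ * x) * hxy
    rw [if_pos (sub_eq_zero.mpr hu), if_pos hu, hL, hGc, Gc_mul_sq_unit,
      AddChar.sum_mul_sq_add_mul ψ (β := β * x) (by linear_combination hβ + 4 * γ * β * hxy),
      Gc]
    simp only [ec_eq_stdAddChar]
    ring
  · rw [if_neg (sub_ne_zero.mpr hu), if_neg hu, Nat.cast_zero, zero_mul]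

/-- For `gcd(c, 2γ) = 1`,
`S_c(γ) = c · ∑_{x ∈ (ℤ/cℤ)ˣ, u ≡ xv (c)} G_c(γx) · e_c(−(4γ)⁻¹ x ((d+u)x⁻¹ + d)²)`. -/
theorem stmt_9 (d u v γ : ℤ) (c : ℕ) [NeZero c] (h : Int.gcd (c : ℤ) (2 * γ) = 1) :
    Sc c d u v γ = (c : ℂ) * ∑ x : (ZMod c)ˣ,
      if (u : ZMod c) = (x : ZMod c) * (v : ZMod c) then
        Gc c ((γ : ZMod c) * (x : ZMod c)) *
          ec c (-((4 * (γ : ZMod c))⁻¹ * (x : ZMod c) *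
            (((d : ZMod c) + (u : ZMod c)) * ((x⁻¹ : (ZMod c)ˣ) : ZMod c) + (d : ZMod c)) ^ 2))
      else 0 := by
  have h2γ : IsUnit (2 * (γ : ZMod c)) := by
    exact_mod_cast (ZMod.coe_int_isUnit_iff_isCoprime (2 * γ) c).mpr
      (Int.isCoprime_iff_gcd_eq_one.mpr h)
  have h4γ : IsUnit (4 * (γ : ZMod c)) := by
    convert (isUnit_of_mul_isUnit_left h2γ).mul h2γ using 1
    ring
  have hSc : Sc c d u v γ = ∑ x : (ZMod c)ˣ, ∑ a : ZMod c, ∑ b : ZMod c, ZMod.stdAddChar (N := c)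
      (a * (γ * a + d) * (x : ZMod c) + b * (γ * b + d) * ((x⁻¹ : (ZMod c)ˣ) : ZMod c)
        + (2 * γ * a * b + (d + u) * a + (d + v) * b)) := by
    simp only [Sc, Kloos, ec_eq_stdAddChar, sum_mul, ← AddChar.map_add_eq_mul]
    exact (sum_congr rfl fun _ _ => sum_comm).trans sum_comm
  rw [hSc, mul_sum]
  refine sum_congr rfl fun x _ => ?_
  rw [sum_sum_stdAddChar_kloosterman_phase c (ZMod.mul_inv_of_unit _ h4γ), mul_ite, mul_zero]
end
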